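/- For G = SU_n and Z = ℤ_k ⊆ ℤ_n = Z(G) (k dividing n), the fundamental level of G/Z equals 1 if n is odd or n/k is even, and equals 2 otherwise; the basic level of G/Z is the smallest positive integer ℓ with (n(n−1)/k²)·ℓ ∈ ℤ. -/

import Mathlib

open scoped RealInnerProductSpace

/-- A level ℓ compatible commutator map on the lattice Λ (relative to the pairing B and
the coroot lattice Q): a bi-multiplicative, skew-symmetric map into the unit circle
satisfying `ω(α,μ) = (-1)^(ℓ⟨α,μ⟩)` whenever α lies in Q. -/
def IsCommutatorForm {V : Type*} [AddCommGroup V] (B : V → V → ℝ) (Q Λ : Set V)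
    (ℓ : ℕ) (ω : V → V → ℂ) : Prop :=
  (∀ a ∈ Λ, ∀ b ∈ Λ, ‖ω a b‖ = 1) ∧
  (∀ a ∈ Λ, ∀ b ∈ Λ, ∀ c ∈ Λ, ω (a + b) c = ω a c * ω b c) ∧
  (∀ a ∈ Λ, ∀ b ∈ Λ, ∀ c ∈ Λ, ω a (b + c) = ω a b * ω a c) ∧
  (∀ a ∈ Λ, ∀ b ∈ Λ, ω a b * ω b a = 1) ∧
  (∀ a ∈ Λ, ω a a = 1) ∧
  (∀ α ∈ Q, α ∈ Λ → ∀ μ ∈ Λ, ∀ z : ℤ, B α μ = (z : ℝ) →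
    ω α μ = (-1 : ℂ) ^ ((ℓ : ℤ) * z))

/-- The coroot (= root) lattice of SU_n: the ℤ-span of the vectors `θ_i - θ_j`. -/
def sunQ (n : ℕ) : Submodule ℤ (EuclideanSpace ℝ (Fin n)) :=
  Submodule.span ℤ {v | ∃ i j : Fin n, i ≠ j ∧
    v = EuclideanSpace.single i (1 : ℝ) - EuclideanSpace.single j (1 : ℝ)}

/-- The fundamental coweight `ω₁ = θ₁ - (1/n) Σ θ_i` of SU_n, generating the center. -/
noncomputable def sunOmega1 (n : ℕ) (hn : 0 < n) : EuclideanSpace ℝ (Fin n) :=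
  EuclideanSpace.single (⟨0, hn⟩ : Fin n) (1 : ℝ) -
    (1 / (n : ℝ)) • ∑ i : Fin n, EuclideanSpace.single i (1 : ℝ)

/-- The integral lattice `Λ_Z` of `SU_n/ℤ_k`: generated by the root lattice together
with `(n/k)·ω₁`. -/
def sunLambda (n k : ℕ) (hn : 0 < n) : Submodule ℤ (EuclideanSpace ℝ (Fin n)) :=
  sunQ n ⊔ Submodule.span ℤ {(((n / k : ℕ) : ℝ)) • sunOmega1 n hn}

/-!
The lattice is `Λ = Q + ℤv` with `v = (n/k)ω₁`, whose class has order exactly `k` modulo the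
root lattice `Q`. The root lattice is even, `⟨Q, v⟩ ⊆ ℤ` and `⟨v, v⟩ = n(n-1)/k²`, so `ℓ⟨·,·⟩` is
integral on `Λ` iff `ℓ⟨v, v⟩ ∈ ℤ`. A commutator form of level `ℓ` gives
`(-1)^(ℓ⟨kv, v⟩) = ω(kv, v) = ω(v, v)^k = 1`, so `ℓ (n/k)(n-1)` is even; conversely, when it is,
`exp (π i ℓ (⟨a, b⟩ - ⟨v, v⟩ c(a) c(b)))`, with `c(x)` a coefficient of `v` in `x`, is such a form.
-/

noncomputable def expPiMulI (r : ℝ) : ℂ := Complex.exp (↑(Real.pi * r) * Complex.I)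

lemma norm_expPiMulI (r : ℝ) : ‖expPiMulI r‖ = 1 := Complex.norm_exp_ofReal_mul_I _

lemma expPiMulI_add (r s : ℝ) : expPiMulI (r + s) = expPiMulI r * expPiMulI s := by
  rw [expPiMulI, expPiMulI, expPiMulI, ← Complex.exp_add]
  push_cast
  ring_nf

lemma expPiMulI_intCast (z : ℤ) : expPiMulI z = (-1) ^ z := by
  rw [expPiMulI, ← Complex.exp_pi_mul_I, ← Complex.exp_int_mul]
  push_cast
  ring_nf

lemma expPiMulI_two_mul_intCast (z : ℤ) : expPiMulI (2 * z) = 1 := by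
  rw [show (2 * z : ℝ) = ((2 * z : ℤ) : ℝ) by push_cast; ring, expPiMulI_intCast,
    (even_two_mul z).neg_one_zpow]

lemma expPiMulI_add_two_mul_intCast (r : ℝ) (z : ℤ) : expPiMulI (r + 2 * z) = expPiMulI r := by
  rw [expPiMulI_add, expPiMulI_two_mul_intCast, mul_one]

lemma isCommutatorForm_expPiMulI {V : Type*} [AddCommGroup V] {B : V → V → ℝ} {Q Λ : Set V}
    {ℓ : ℕ} {φ : V → V → ℝ}
    (add_left : ∀ a ∈ Λ, ∀ b ∈ Λ, ∀ c ∈ Λ, ∃ z : ℤ, φ (a + b) c = φ a c + φ b c + 2 * z)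
    (add_right : ∀ a ∈ Λ, ∀ b ∈ Λ, ∀ c ∈ Λ, ∃ z : ℤ, φ a (b + c) = φ a b + φ a c + 2 * z)
    (diag : ∀ a ∈ Λ, ∃ z : ℤ, φ a a = 2 * z)
    (skew : ∀ a ∈ Λ, ∀ b ∈ Λ, ∃ z : ℤ, φ a b + φ b a = 2 * z)
    (compat : ∀ α ∈ Q, α ∈ Λ → ∀ μ ∈ Λ, ∃ z : ℤ, φ α μ = ℓ * B α μ + 2 * z) :
    IsCommutatorForm B Q Λ ℓ (fun a b => expPiMulI (φ a b)) := by
  refine ⟨fun a _ b _ => norm_expPiMulI _, ?_, ?_, ?_, ?_, ?_⟩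
  · intro a ha b hb c hc
    obtain ⟨z, hz⟩ := add_left a ha b hb c hc
    dsimp only
    rw [hz, expPiMulI_add_two_mul_intCast, expPiMulI_add]
  · intro a ha b hb c hc
    obtain ⟨z, hz⟩ := add_right a ha b hb c hc
    dsimp only
    rw [hz, expPiMulI_add_two_mul_intCast, expPiMulI_add]
  · intro a ha b hb
    obtain ⟨z, hz⟩ := skew a ha b hb
    rw [← expPiMulI_add, hz, expPiMulI_two_mul_intCast]
  · intro a ha
    obtain ⟨z, hz⟩ := diag a ha
    dsimp only
    rw [hz, expPiMulI_two_mul_intCast]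
  · intro α hαQ hαΛ μ hμ w hw
    obtain ⟨z, hz⟩ := compat α hαQ hαΛ μ hμ
    dsimp only
    rw [hz, hw, expPiMulI_add_two_mul_intCast, ← expPiMulI_intCast]
    push_cast
    ring_nf

namespace IsCommutatorForm

variable {V : Type*} [AddCommGroup V] {S : Type*} [SetLike S V] [AddSubmonoidClass S V]
  {B : V → V → ℝ} {Q : Set V} {Λ : S} {ℓ : ℕ} {ω : V → V → ℂ}

lemma zero_left (hω : IsCommutatorForm B Q Λ ℓ ω) {b : V} (hb : b ∈ Λ) : ω 0 b = 1 := by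
  have h0 : (0 : V) ∈ Λ := zero_mem Λ
  have hne : ω 0 b ≠ 0 := by
    intro h
    simpa [h] using hω.1 0 h0 b hb
  have h := hω.2.1 0 h0 0 h0 b hb
  rw [add_zero] at h
  exact (left_eq_mul₀ hne).mp h

lemma nsmul_left (hω : IsCommutatorForm B Q Λ ℓ ω) {a b : V} (ha : a ∈ Λ) (hb : b ∈ Λ)
    (j : ℕ) : ω (j • a) b = ω a b ^ j := by
  induction j with
  | zero => simpa using hω.zero_left hb
  | succ j ih =>
    rw [succ_nsmul, hω.2.1 _ (nsmul_mem ha j) a ha b hb, ih, pow_succ]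

lemma even_mul_of_nsmul_mem (hω : IsCommutatorForm B Q Λ ℓ ω) {v : V} (hv : v ∈ Λ) {k : ℕ}
    (hkv : k • v ∈ Q) {z : ℤ} (hz : B (k • v) v = z) : Even ((ℓ : ℤ) * z) := by
  have h := hω.2.2.2.2.2 _ hkv (nsmul_mem hv k) v hv z hz
  rw [hω.nsmul_left hv hv, hω.2.2.2.2.1 v hv, one_pow, neg_one_zpow_eq_ite] at h
  by_contra hodd
  rw [if_neg hodd] at h
  norm_num at h

end IsCommutatorForm

lemma Submodule.mem_sup_span_singleton_iff_exists_sub_zsmul_mem {M : Type*} [AddCommGroup M]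
    {Q : Submodule ℤ M} {v x : M} :
    x ∈ Q ⊔ Submodule.span ℤ {v} ↔ ∃ s : ℤ, x - s • v ∈ Q := by
  simp only [Submodule.mem_sup, Submodule.mem_span_singleton]
  constructor
  · rintro ⟨q, hq, _, ⟨s, rfl⟩, rfl⟩
    exact ⟨s, by simpa using hq⟩
  · rintro ⟨s, hs⟩
    exact ⟨_, hs, _, ⟨s, rfl⟩, sub_add_cancel x _⟩

lemma dvd_sub_of_sub_zsmul_mem {M : Type*} [AddCommGroup M] {Q : Submodule ℤ M} {v : M} {k : ℤ}
    (horder : ∀ s : ℤ, s • v ∈ Q → k ∣ s) {x : M} {s t : ℤ} (hs : x - s • v ∈ Q) (ht : x - t • v ∈ Q) : k ∣ s - t :=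
  horder _ (by simpa [sub_smul] using sub_mem ht hs)

section EvenLattice

variable {E : Type*} [NormedAddCommGroup E] [InnerProductSpace ℝ E]

def IsEvenIntegral (Q : Submodule ℤ E) : Prop := ∀ q ∈ Q, ∃ z : ℤ, ⟪q, q⟫ = 2 * z

lemma IsEvenIntegral.exists_inner_eq_intCast {Q : Submodule ℤ E} (hQ : IsEvenIntegral Q)
    {q q' : E} (hq : q ∈ Q) (hq' : q' ∈ Q) : ∃ z : ℤ, ⟪q, q'⟫ = z := by
  obtain ⟨a, ha⟩ := hQ _ (add_mem hq hq')
  obtain ⟨b, hb⟩ := hQ q hq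
  obtain ⟨c, hc⟩ := hQ q' hq'
  refine ⟨a - b - c, ?_⟩
  have := real_inner_add_add_self q q'
  push_cast
  linarith

variable {Q : Submodule ℤ E} {v : E}

lemma inner_add_zsmul_add_zsmul (q q' : E) (s t : ℤ) :
    ⟪q + s • v, q' + t • v⟫ = ⟪q, q'⟫ + t * ⟪q, v⟫ + s * ⟪q', v⟫ + s * t * ⟪v, v⟫ := by
  simp only [← Int.cast_smul_eq_zsmul ℝ, inner_add_left, inner_add_right, real_inner_smul_left,
    real_inner_smul_right, real_inner_comm v q']
  ring

lemma IsEvenIntegral.exists_inner_eq_intCast_add (hQ : IsEvenIntegral Q)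
    (hQv : ∀ q ∈ Q, ∃ z : ℤ, ⟪q, v⟫ = z) {x y : E} {s t : ℤ} (hx : x - s • v ∈ Q)
    (hy : y - t • v ∈ Q) : ∃ z : ℤ, ⟪x, y⟫ = z + s * t * ⟪v, v⟫ := by
  obtain ⟨a, ha⟩ := hQ.exists_inner_eq_intCast hx hy
  obtain ⟨b, hb⟩ := hQv _ hx
  obtain ⟨c, hc⟩ := hQv _ hy
  refine ⟨a + t * b + s * c, ?_⟩
  have h := inner_add_zsmul_add_zsmul (v := v) (x - s • v) (y - t • v) s t
  rw [sub_add_cancel, sub_add_cancel] at h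
  rw [h, ha, hb, hc]
  push_cast
  ring

lemma IsEvenIntegral.exists_inner_self_eq_two_mul_intCast_add (hQ : IsEvenIntegral Q)
    (hQv : ∀ q ∈ Q, ∃ z : ℤ, ⟪q, v⟫ = z) {x : E} {s : ℤ} (hx : x - s • v ∈ Q) :
    ∃ z : ℤ, ⟪x, x⟫ = 2 * z + s * s * ⟪v, v⟫ := by
  obtain ⟨a, ha⟩ := hQ _ hx
  obtain ⟨b, hb⟩ := hQv _ hx
  refine ⟨a + s * b, ?_⟩
  have h := inner_add_zsmul_add_zsmul (v := v) (x - s • v) (x - s • v) s s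
  rw [sub_add_cancel] at h
  rw [h, ha, hb]
  push_cast
  ring

lemma IsEvenIntegral.forall_exists_mul_inner_eq_intCast_iff (hQ : IsEvenIntegral Q)
    (hQv : ∀ q ∈ Q, ∃ z : ℤ, ⟪q, v⟫ = z) (ℓ : ℤ) :
    (∀ a ∈ Q ⊔ Submodule.span ℤ {v}, ∀ b ∈ Q ⊔ Submodule.span ℤ {v},
        ∃ z : ℤ, ℓ * ⟪a, b⟫ = z) ↔ ∃ z : ℤ, ℓ * ⟪v, v⟫ = z := by
  have hv : v ∈ Q ⊔ Submodule.span ℤ {v} :=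
    Submodule.mem_sup_right (Submodule.mem_span_singleton_self v)
  refine ⟨fun h => h v hv v hv, ?_⟩
  rintro ⟨w, hw⟩ a ha b hb
  obtain ⟨s, hs⟩ := Submodule.mem_sup_span_singleton_iff_exists_sub_zsmul_mem.mp ha
  obtain ⟨t, ht⟩ := Submodule.mem_sup_span_singleton_iff_exists_sub_zsmul_mem.mp hb
  obtain ⟨z, hz⟩ := hQ.exists_inner_eq_intCast_add hQv hs ht
  refine ⟨ℓ * z + s * t * w, ?_⟩
  rw [hz]
  push_cast
  linear_combination (s * t : ℝ) * hw

/-- The coefficient `c x` of `v` in `x` is only defined modulo `k`; the correction term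
`⟪v, v⟫ c(a) c(b)` makes `⟪a, b⟫ - ⟪v, v⟫ c(a) c(b)` integral, and changing `c` by a multiple of
`k` changes `ℓ` times it by an even integer. -/
theorem IsEvenIntegral.exists_isCommutatorForm (hQ : IsEvenIntegral Q)
    (hQv : ∀ q ∈ Q, ∃ z : ℤ, ⟪q, v⟫ = z) {k : ℤ} (horder : ∀ s : ℤ, s • v ∈ Q → k ∣ s)
    {ℓ : ℕ} (hℓ : ∃ t : ℤ, ℓ * (k * ⟪v, v⟫) = 2 * t) :
    ∃ ω : E → E → ℂ, IsCommutatorForm (fun a b => ⟪a, b⟫) (Q : Set E)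
      (Q ⊔ Submodule.span ℤ {v} : Submodule ℤ E) ℓ ω := by
  obtain ⟨t, ht⟩ := hℓ
  choose! c hc using fun x (hx : x ∈ Q ⊔ Submodule.span ℤ {v}) =>
    Submodule.mem_sup_span_singleton_iff_exists_sub_zsmul_mem.mp hx
  refine ⟨_, isCommutatorForm_expPiMulI (φ := fun a b => ℓ * (⟪a, b⟫ - ⟪v, v⟫ * c a * c b))
    ?_ ?_ ?_ ?_ ?_⟩
  · intro a ha b hb d hd
    obtain ⟨e, he⟩ := dvd_sub_of_sub_zsmul_mem (t := c a + c b) horder (hc _ (add_mem ha hb))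
      (by simpa [add_smul, add_sub_add_comm] using add_mem (hc a ha) (hc b hb))
    refine ⟨-(t * e * c d), ?_⟩
    have he' : (c (a + b) : ℝ) = c a + c b + k * e := by exact_mod_cast by linarith
    simp only [inner_add_left, he']
    push_cast
    linear_combination (-(e : ℝ) * c d) * ht
  · intro a ha b hb d hd
    obtain ⟨e, he⟩ := dvd_sub_of_sub_zsmul_mem (t := c b + c d) horder (hc _ (add_mem hb hd))
      (by simpa [add_smul, add_sub_add_comm] using add_mem (hc b hb) (hc d hd))
    refine ⟨-(t * e * c a), ?_⟩
    have he' : (c (b + d) : ℝ) = c b + c d + k * e := by exact_mod_cast by linarith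
    simp only [inner_add_right, he']
    push_cast
    linear_combination (-(e : ℝ) * c a) * ht
  · intro a ha
    obtain ⟨z, hz⟩ := hQ.exists_inner_self_eq_two_mul_intCast_add hQv (hc a ha)
    exact ⟨ℓ * z, by rw [hz]; push_cast; ring⟩
  · intro a ha b hb
    obtain ⟨z, hz⟩ := hQ.exists_inner_eq_intCast_add hQv (hc a ha) (hc b hb)
    exact ⟨ℓ * z, by rw [real_inner_comm a b, hz]; push_cast; ring⟩
  · intro α hαQ hαΛ μ hμ
    obtain ⟨e, he⟩ := dvd_sub_of_sub_zsmul_mem (t := 0) horder (hc α hαΛ) (by simpa using hαQ)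
    refine ⟨-(t * e * c μ), ?_⟩
    have he' : (c α : ℝ) = k * e := by exact_mod_cast by linarith
    rw [he']
    push_cast
    linear_combination (-(e : ℝ) * c μ) * ht

end EvenLattice

section SU

variable {n : ℕ}

lemma single_sub_single_mem_sunQ (i j : Fin n) :
    EuclideanSpace.single i (1 : ℝ) - EuclideanSpace.single j 1 ∈ sunQ n := by
  obtain rfl | hij := eq_or_ne i j
  · simp
  · exact Submodule.subset_span ⟨i, j, hij, rfl⟩

lemma exists_intCast_apply_of_mem_sunQ {q : EuclideanSpace ℝ (Fin n)} (hq : q ∈ sunQ n)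
    (p : Fin n) : ∃ z : ℤ, q p = z := by
  induction hq using Submodule.span_induction with
  | mem x h =>
    obtain ⟨i, j, -, rfl⟩ := h
    exact ⟨(if p = i then 1 else 0) - (if p = j then 1 else 0), by simp⟩
  | zero => exact ⟨0, by simp⟩
  | add x y _ _ hx hy =>
    obtain ⟨a, ha⟩ := hx
    obtain ⟨b, hb⟩ := hy
    exact ⟨a + b, by simp [ha, hb]⟩
  | smul s x _ hx =>
    obtain ⟨a, ha⟩ := hx
    exact ⟨s * a, by simp [ha]⟩

lemma sum_apply_eq_zero_of_mem_sunQ {q : EuclideanSpace ℝ (Fin n)} (hq : q ∈ sunQ n) :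
    ∑ i, q i = 0 := by
  induction hq using Submodule.span_induction with
  | mem x h =>
    obtain ⟨i, j, -, rfl⟩ := h
    simp [Finset.sum_sub_distrib]
  | zero => simp
  | add x y _ _ hx hy => simp [Finset.sum_add_distrib, hx, hy]
  | smul s x _ hx => simp [← Finset.mul_sum, hx]

/-- `∑ qᵢ² ≡ ∑ qᵢ = 0 (mod 2)`. -/
lemma sunQ_isEvenIntegral : IsEvenIntegral (sunQ n) := by
  intro q hq
  choose z hz using exists_intCast_apply_of_mem_sunQ hq
  have hsum : ∑ i, z i = 0 := by
    exact_mod_cast (show ((∑ i, z i : ℤ) : ℝ) = 0 by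
      push_cast; simpa [hz] using sum_apply_eq_zero_of_mem_sunQ hq)
  obtain ⟨w, hw⟩ : Even (∑ i, z i * (z i - 1)) :=
    Finset.even_sum _ fun i _ => Int.even_mul_pred_self (z i)
  refine ⟨w, ?_⟩
  have hsq : ∑ i, z i * z i = w + w := by
    rw [← hw, ← sub_eq_zero, ← Finset.sum_sub_distrib]
    simpa [mul_sub] using hsum
  simp only [PiLp.inner_apply, RCLike.inner_apply, conj_trivial, hz]
  exact_mod_cast (by rw [hsq]; ring : ∑ i, z i * z i = 2 * w)

lemma sunOmega1_apply (hn : 0 < n) (p : Fin n) :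
    sunOmega1 n hn p = (if p = ⟨0, hn⟩ then 1 else 0) - 1 / n := by
  simp [sunOmega1]

lemma inner_sunOmega1 (hn : 0 < n) (x : EuclideanSpace ℝ (Fin n)) :
    ⟪x, sunOmega1 n hn⟫ = x ⟨0, hn⟩ - (∑ i, x i) / n := by
  simp [PiLp.inner_apply, sunOmega1_apply, sub_mul, Finset.sum_sub_distrib, div_eq_mul_inv,
    mul_comm, Finset.sum_mul]

lemma inner_sunOmega1_self (hn : 0 < n) : ⟪sunOmega1 n hn, sunOmega1 n hn⟫ = (n - 1) / n := by
  have hn' : (n : ℝ) ≠ 0 := by positivity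
  rw [inner_sunOmega1]
  simp only [sunOmega1_apply, Finset.sum_sub_distrib, Finset.sum_ite_eq', Finset.mem_univ,
    if_true, Finset.sum_const, Finset.card_univ, Fintype.card_fin, nsmul_eq_mul]
  field_simp
  ring

lemma exists_inner_natCast_smul_sunOmega1_eq_intCast (hn : 0 < n) (m : ℕ)
    {q : EuclideanSpace ℝ (Fin n)} (hq : q ∈ sunQ n) :
    ∃ z : ℤ, ⟪q, (m : ℝ) • sunOmega1 n hn⟫ = z := by
  obtain ⟨z, hz⟩ := exists_intCast_apply_of_mem_sunQ hq ⟨0, hn⟩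
  refine ⟨m * z, ?_⟩
  rw [real_inner_smul_right, inner_sunOmega1, sum_apply_eq_zero_of_mem_sunQ hq, zero_div,
    sub_zero, hz, Int.cast_mul, Int.cast_natCast]

lemma natCast_smul_sunOmega1_mem_sunQ (hn : 0 < n) : (n : ℝ) • sunOmega1 n hn ∈ sunQ n := by
  have h : (n : ℝ) • sunOmega1 n hn =
      ∑ i, (EuclideanSpace.single ⟨0, hn⟩ (1 : ℝ) - EuclideanSpace.single i 1) := by
    have hn' : (n : ℝ) ≠ 0 := by positivity
    rw [Finset.sum_sub_distrib, Finset.sum_const, Finset.card_univ, Fintype.card_fin,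
      ← Nat.cast_smul_eq_nsmul ℝ, sunOmega1, smul_sub, smul_smul, mul_one_div_cancel hn',
      one_smul]
  rw [h]
  exact Submodule.sum_mem _ fun i _ => single_sub_single_mem_sunQ _ i

lemma exists_eq_natCast_mul_of_smul_sunOmega1_mem_sunQ (hn : 2 ≤ n) {r : ℝ}
    (h : r • sunOmega1 n (two_pos.trans_le hn) ∈ sunQ n) : ∃ z : ℤ, r = n * z := by
  obtain ⟨z, hz⟩ := exists_intCast_apply_of_mem_sunQ h ⟨1, hn⟩
  have hn' : (n : ℝ) ≠ 0 := by positivity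
  refine ⟨-z, ?_⟩
  rw [PiLp.smul_apply, sunOmega1_apply, if_neg (by simp), smul_eq_mul] at hz
  field_simp at hz
  push_cast
  linarith

end SU

section SUQuotient

variable {n k : ℕ}

lemma nsmul_smul_sunOmega1_mem_sunQ (hn : 0 < n) (hkn : k ∣ n) :
    k • (((n / k : ℕ) : ℝ) • sunOmega1 n hn) ∈ sunQ n := by
  rw [← Nat.cast_smul_eq_nsmul ℝ, smul_smul, ← Nat.cast_mul, Nat.mul_div_cancel' hkn]
  exact natCast_smul_sunOmega1_mem_sunQ hn

lemma dvd_of_zsmul_smul_sunOmega1_mem_sunQ (hn : 2 ≤ n) (hkn : k ∣ n) {s : ℤ}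
    (h : s • (((n / k : ℕ) : ℝ) • sunOmega1 n (two_pos.trans_le hn)) ∈ sunQ n) :
    (k : ℤ) ∣ s := by
  rw [← Int.cast_smul_eq_zsmul ℝ, smul_smul] at h
  obtain ⟨z, hz⟩ := exists_eq_natCast_mul_of_smul_sunOmega1_mem_sunQ hn h
  obtain ⟨m, rfl⟩ := hkn
  have hm : (m : ℝ) ≠ 0 := Nat.cast_ne_zero.mpr (by rintro rfl; simp at hn)
  have hk : 0 < k := Nat.pos_of_ne_zero (by rintro rfl; simp at hn)
  rw [Nat.mul_div_cancel_left m hk] at hz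
  have h' : (s : ℝ) * m = (k * z : ℤ) * m := by push_cast at hz ⊢; linarith
  exact ⟨z, by exact_mod_cast mul_right_cancel₀ hm h'⟩

lemma inner_smul_sunOmega1_self (hn : 0 < n) (hkn : k ∣ n) :
    ⟪((n / k : ℕ) : ℝ) • sunOmega1 n hn, ((n / k : ℕ) : ℝ) • sunOmega1 n hn⟫
      = (n : ℝ) * ((n : ℝ) - 1) / (k : ℝ) ^ 2 := by
  obtain ⟨m, rfl⟩ := hkn
  have hk : 0 < k := Nat.pos_of_ne_zero (by rintro rfl; simp at hn)
  rw [real_inner_smul_left, real_inner_smul_right, inner_sunOmega1_self,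
    Nat.mul_div_cancel_left m hk]
  have : (k : ℝ) ≠ 0 := by positivity
  push_cast
  field_simp

theorem sunLambda_exists_isCommutatorForm_iff (hn : 2 ≤ n) (hkn : k ∣ n) (ℓ : ℕ) :
    (∃ ω : EuclideanSpace ℝ (Fin n) → _ → ℂ,
        IsCommutatorForm (fun a b => ⟪a, b⟫) (sunQ n : Set _)
          (sunLambda n k (two_pos.trans_le hn) : Set _) ℓ ω) ↔ Even (ℓ * (n / k * (n - 1))) := by
  set V := ((n / k : ℕ) : ℝ) • sunOmega1 n (two_pos.trans_le hn)
  have hk : 0 < k := Nat.pos_of_dvd_of_pos hkn (two_pos.trans_le hn)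
  have hkV : (k : ℝ) * ⟪V, V⟫ = ((n / k * (n - 1) : ℕ) : ℝ) := by
    rw [inner_smul_sunOmega1_self _ hkn]
    obtain ⟨m, rfl⟩ := hkn
    rw [Nat.mul_div_cancel_left m hk]
    have : (k : ℝ) ≠ 0 := by positivity
    push_cast [Nat.one_le_iff_ne_zero.mpr (by omega : k * m ≠ 0)]
    field_simp
  constructor
  · rintro ⟨ω, hω⟩
    have hVΛ : V ∈ sunLambda n k (two_pos.trans_le hn) :=
      Submodule.mem_sup_right (Submodule.mem_span_singleton_self V)
    have h := hω.even_mul_of_nsmul_mem (Λ := sunLambda n k (two_pos.trans_le hn)) hVΛ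
      (nsmul_smul_sunOmega1_mem_sunQ _ hkn) (z := (n / k * (n - 1) : ℕ))
      (by rw [← Nat.cast_smul_eq_nsmul ℝ, real_inner_smul_left, hkV]; rfl)
    exact_mod_cast h
  · rintro ⟨t, ht⟩
    refine sunQ_isEvenIntegral.exists_isCommutatorForm
      (fun _ hq => ?_) (fun _ => dvd_of_zsmul_smul_sunOmega1_mem_sunQ hn hkn) ⟨t, ?_⟩
    · exact exists_inner_natCast_smul_sunOmega1_eq_intCast _ _ hq
    · change (ℓ : ℝ) * ((k : ℝ) * ⟪V, V⟫) = _
      rw [hkV, Int.cast_natCast, two_mul, ← Nat.cast_mul, ht, Nat.cast_add]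

end SUQuotient

/-- For `G = SU_n` and `Z = ℤ_k ⊆ ℤ_n = Z(G)` (k ∣ n), the fundamental
level of `G/Z` equals 1 if n is odd or n/k is even, and equals 2 otherwise; the basic
level of `G/Z` is the smallest positive integer ℓ with `(n(n-1)/k²)·ℓ ∈ ℤ`. -/
theorem sun_fundamental_and_basic_level
    (n k : ℕ) (hn : 2 ≤ n) (hkn : k ∣ n) :
    IsLeast {ℓ : ℕ | 1 ≤ ℓ ∧ ∃ ω : EuclideanSpace ℝ (Fin n) → _ → ℂ,
        IsCommutatorForm (fun a b => ⟪a, b⟫) (sunQ n : Set _)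
          (sunLambda n k (by omega) : Set _) ℓ ω}
      (if Odd n ∨ Even (n / k) then 1 else 2) ∧
    ∀ ℓ : ℕ, 1 ≤ ℓ →
      ((∀ a ∈ sunLambda n k (by omega), ∀ b ∈ sunLambda n k (by omega),
          ∃ z : ℤ, (ℓ : ℝ) * ⟪a, b⟫ = (z : ℝ)) ↔
        ∃ z : ℤ, (ℓ : ℝ) * ((n : ℝ) * ((n : ℝ) - 1) / (k : ℝ) ^ 2) = (z : ℝ)) := by
  have hparity : Even (n / k * (n - 1)) ↔ Odd n ∨ Even (n / k) := by
    rw [Nat.even_mul, Nat.even_sub (by omega : 1 ≤ n), ← Nat.not_even_iff_odd]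
    simp only [Nat.not_even_one, iff_false]
    tauto
  refine ⟨⟨?_, ?_⟩, fun ℓ _ => ?_⟩
  · split_ifs with h
    · refine ⟨le_rfl, (sunLambda_exists_isCommutatorForm_iff hn hkn 1).mpr ?_⟩
      rwa [one_mul, hparity]
    · exact ⟨by norm_num, (sunLambda_exists_isCommutatorForm_iff hn hkn 2).mpr (even_two_mul _)⟩
  · rintro ℓ ⟨hℓ, hω⟩
    split_ifs with h
    · exact hℓ
    · have hℓ2 := (sunLambda_exists_isCommutatorForm_iff hn hkn ℓ).mp hω
      rw [Nat.even_mul, hparity, or_iff_left h] at hℓ2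
      obtain ⟨j, rfl⟩ := hℓ2
      omega
  · have h := sunQ_isEvenIntegral.forall_exists_mul_inner_eq_intCast_iff
      (fun _ => exists_inner_natCast_smul_sunOmega1_eq_intCast (two_pos.trans_le hn) (n / k)) ℓ
    rw [inner_smul_sunOmega1_self _ hkn, Int.cast_natCast] at h
    exact h
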